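/- (Sharpness of Theorem 1) For every n ≥ 2, every d with 1 ≤ d ≤ n, and every pair z, w ∈ 𝔻, there exists a holomorphic map 𝔉 : 𝔻 → Ω_n such that, writing d(z), d(w) for the degrees of the minimal polynomials of 𝔉(z), 𝔉(w), one has max{ max_{μ ∈ σ(𝔉(w))} dist_ℳ(μ; σ(𝔉(z)))^{d(z)}, max_{λ ∈ σ(𝔉(z))} dist_ℳ(λ; σ(𝔉(w)))^{d(w)} } = |(z − w)/(1 − conj(z)w)|. Explicitly, one may take 𝔉(ζ) = diag(N_d(M(ζ)), M(ζ)·I_{n−d}) where M(ζ) = (ζ − z)/(1 − conj(z)ζ) and N_d(η) is the d×d matrix with 1's on the subdiagonal and η in the (1,d) corner. -/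

import Mathlib

open Metric

/-- The spectral radius of a complex `n × n` matrix. -/
noncomputable def sRad {n : ℕ} (A : Matrix (Fin n) (Fin n) ℂ) : ℝ :=
  sSup ((fun μ => ‖μ‖) '' spectrum ℂ A)

/-- The pseudo-hyperbolic distance from `μ` to a set `K ⊆ 𝔻`. -/
noncomputable def distM (μ : ℂ) (K : Set ℂ) : ℝ :=
  sInf ((fun z => ‖(μ - z) / (1 - (starRingEnd ℂ z) * μ)‖) '' K)

/-- The `n × n` block-diagonal matrix `diag(N_d(η), η·I_{n-d})`, where `N_d(η)` is the
`d × d` matrix with `1`'s on the subdiagonal and `η` in the `(1,d)` corner. -/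
def Fmat (n d : ℕ) (η : ℂ) : Matrix (Fin n) (Fin n) ℂ :=
  Matrix.of fun i j =>
    if (i : ℕ) < d ∧ (j : ℕ) < d then
      (if (i : ℕ) = (j : ℕ) + 1 then 1 else if (i : ℕ) = 0 ∧ (j : ℕ) = d - 1 then η else 0)
    else if i = j then η else 0

/-!
On the first `d` coordinates `Fmat n d η` shifts the standard basis cyclically, `e_k ↦ e_{k+1}`
and `e_{d-1} ↦ η e₀`, and on the remaining ones it is multiplication by `η`. Hence it is
annihilated by `(X ^ d - η)(X - η)`, so its eigenvalues are `d`-th roots of `η` or `η` itself;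
every `d`-th root of `η` does occur; and `e₀, Fe₀, …, F^{d-1}e₀` are independent, so its minimal
polynomial has degree at least `d`. For `η = 0` the matrix is nilpotent of index `d`.

With `η = M(w)` and `M(z) = 0`, the pseudo-hyperbolic distance to `σ(𝔉(z)) = {0}` is the modulus,
so the first term of the maximum is `max |μ|^d = |η|` over `μ ∈ σ(𝔉(w))`, while the second is at
most `|μ₀|^{d(w)} ≤ |μ₀|^d = |η|` for any `d`-th root `μ₀` of `η`.
-/

open Polynomial Matrix

/-- Indexed by `ℕ` so that index arithmetic stays in `ℕ`; it is `0` when `n ≤ k`. -/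
def natSingle (n k : ℕ) : Fin n → ℂ := fun i => if (i : ℕ) = k then 1 else 0

section natSingle

variable {n : ℕ}

lemma mulVec_natSingle (M : Matrix (Fin n) (Fin n) ℂ) {k : ℕ} (hk : k < n) :
    M *ᵥ natSingle n k = fun i => M i ⟨k, hk⟩ := by
  have : natSingle n k = Pi.single (⟨k, hk⟩ : Fin n) 1 := by
    funext i
    simp [natSingle, Pi.single_apply, Fin.ext_iff]
  rw [this, mulVec_single]
  ext i
  simp

lemma eq_zero_of_forall_mulVec_natSingle {M : Matrix (Fin n) (Fin n) ℂ}
    (h : ∀ k < n, M *ᵥ natSingle n k = 0) : M = 0 := by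
  ext i j
  simpa [mulVec_natSingle M j.isLt] using congrFun (h j j.isLt) i

end natSingle

section Fmat

variable {n d : ℕ} (η : ℂ)

lemma Fmat_mulVec_natSingle_of_succ_lt (hdn : d ≤ n) {j : ℕ} (hj : j + 1 < d) :
    Fmat n d η *ᵥ natSingle n j = natSingle n (j + 1) := by
  rw [mulVec_natSingle _ (by omega)]
  funext i
  simp only [Fmat, of_apply, natSingle]
  split_ifs <;> simp_all <;> omega

lemma Fmat_mulVec_natSingle_pred (hd : 0 < d) (hdn : d ≤ n) :
    Fmat n d η *ᵥ natSingle n (d - 1) = η • natSingle n 0 := by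
  rw [mulVec_natSingle _ (by omega)]
  funext i
  simp only [Fmat, of_apply, natSingle, Pi.smul_apply, smul_eq_mul]
  split_ifs <;> simp_all; omega

lemma Fmat_mulVec_natSingle_of_le {j : ℕ} (hdj : d ≤ j) (hjn : j < n) :
    Fmat n d η *ᵥ natSingle n j = η • natSingle n j := by
  rw [mulVec_natSingle _ hjn]
  funext i
  simp only [Fmat, of_apply, natSingle, Pi.smul_apply, smul_eq_mul, Fin.ext_iff]
  split_ifs <;> simp_all <;> omega

lemma Fmat_pow_mulVec_natSingle_zero (hdn : d ≤ n) {k : ℕ} (hk : k < d) :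
    Fmat n d η ^ k *ᵥ natSingle n 0 = natSingle n k := by
  induction k with
  | zero => rw [pow_zero, one_mulVec]
  | succ k ih =>
    rw [pow_succ', ← mulVec_mulVec, ih (by omega),
      Fmat_mulVec_natSingle_of_succ_lt η hdn hk]

lemma Fmat_pow_mulVec_natSingle_of_lt (hdn : d ≤ n) {j : ℕ} (hj : j < d) :
    Fmat n d η ^ d *ᵥ natSingle n j = η • natSingle n j := by
  have hd : 0 < d := by omega
  have h0 : Fmat n d η ^ d *ᵥ natSingle n 0 = η • natSingle n 0 := by
    rw [show Fmat n d η ^ d = Fmat n d η * Fmat n d η ^ (d - 1) by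
        rw [← pow_succ', Nat.sub_add_cancel hd], ← mulVec_mulVec,
      Fmat_pow_mulVec_natSingle_zero η hdn (by omega), Fmat_mulVec_natSingle_pred η hd hdn]
  rw [← Fmat_pow_mulVec_natSingle_zero η hdn hj, mulVec_mulVec, ← pow_mul_comm,
    ← mulVec_mulVec, h0, mulVec_smul]

lemma Fmat_pow_mulVec_natSingle_of_le {j : ℕ} (hdj : d ≤ j) (hjn : j < n) (m : ℕ) :
    Fmat n d η ^ m *ᵥ natSingle n j = η ^ m • natSingle n j := by
  induction m with
  | zero => rw [pow_zero, pow_zero, one_mulVec, one_smul]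
  | succ m ih =>
    rw [pow_succ, ← mulVec_mulVec, Fmat_mulVec_natSingle_of_le η hdj hjn, mulVec_smul, ih,
      smul_smul, pow_succ']

lemma aeval_Fmat (hdn : d ≤ n) :
    aeval (Fmat n d η) ((X ^ d - C η) * (X - C η)) = 0 := by
  refine eq_zero_of_forall_mulVec_natSingle fun k hk => ?_
  have hsub (p : ℂ[X]) : aeval (Fmat n d η) (p - C η) = aeval (Fmat n d η) p - η • 1 := by
    rw [map_sub, aeval_C, Algebra.algebraMap_eq_smul_one]
  rcases lt_or_ge k d with hkd | hdk
  · rw [mul_comm, aeval_mul, ← mulVec_mulVec, hsub (X ^ d), map_pow, aeval_X, sub_mulVec,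
      Fmat_pow_mulVec_natSingle_of_lt η hdn hkd, smul_mulVec, one_mulVec, sub_self, mulVec_zero]
  · rw [aeval_mul, ← mulVec_mulVec, hsub X, aeval_X, sub_mulVec,
      Fmat_mulVec_natSingle_of_le η hdk hk, smul_mulVec, one_mulVec, sub_self, mulVec_zero]

lemma Fmat_zero_pow (hd : 0 < d) (hdn : d ≤ n) : Fmat n d 0 ^ d = 0 := by
  refine eq_zero_of_forall_mulVec_natSingle fun k hk => ?_
  rcases lt_or_ge k d with hkd | hdk
  · rw [Fmat_pow_mulVec_natSingle_of_lt 0 hdn hkd, zero_smul]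
  · rw [Fmat_pow_mulVec_natSingle_of_le 0 hdk hk, zero_pow hd.ne', zero_smul]

lemma aeval_Fmat_mulVec_natSingle_zero_ne_zero (hdn : d ≤ n) {p : ℂ[X]} (hp : p ≠ 0)
    (hpd : p.natDegree < d) : aeval (Fmat n d η) p *ᵥ natSingle n 0 ≠ 0 := by
  intro h
  rw [aeval_eq_sum_range' hpd, sum_mulVec] at h
  have hsum : ∑ i ∈ Finset.range d, p.coeff i • natSingle n i = 0 := by
    rw [← h]
    refine Finset.sum_congr rfl fun i hi => ?_
    rw [smul_mulVec, Fmat_pow_mulVec_natSingle_zero η hdn (Finset.mem_range.mp hi)]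
  -- the `natDegree`-th coordinate of the sum is the leading coefficient
  have hlead := congrFun hsum ⟨p.natDegree, by omega⟩
  exact hp (by simpa [natSingle, Finset.sum_apply, hpd] using hlead)

lemma le_natDegree_minpoly_Fmat (hdn : d ≤ n) : d ≤ (minpoly ℂ (Fmat n d η)).natDegree := by
  by_contra! hlt
  exact aeval_Fmat_mulVec_natSingle_zero_ne_zero η hdn (minpoly.ne_zero (isIntegral _)) hlt
    (by rw [minpoly.aeval, zero_mulVec])

lemma natDegree_minpoly_Fmat_zero (hd : 0 < d) (hdn : d ≤ n) :
    (minpoly ℂ (Fmat n d 0)).natDegree = d := by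
  refine le_antisymm ?_ (le_natDegree_minpoly_Fmat 0 hdn)
  have hdvd : minpoly ℂ (Fmat n d 0) ∣ X ^ d :=
    minpoly.dvd ℂ _ (by rw [map_pow, aeval_X, Fmat_zero_pow hd hdn])
  simpa using natDegree_le_of_dvd hdvd (pow_ne_zero d X_ne_zero)

lemma pow_eq_or_eq_of_mem_spectrum_Fmat (hd : 0 < d) (hdn : d ≤ n) {μ : ℂ}
    (hμ : μ ∈ spectrum ℂ (Fmat n d η)) : μ ^ d = η ∨ μ = η := by
  have : Nonempty (Fin n) := ⟨⟨0, by omega⟩⟩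
  have h := spectrum.subset_polynomial_aeval (Fmat n d η) ((X ^ d - C η) * (X - C η))
    ⟨μ, hμ, rfl⟩
  rw [aeval_Fmat η hdn, spectrum.zero_eq, Set.mem_singleton_iff] at h
  simpa [sub_eq_zero] using h

/-- If `X ^ d - η = (X - μ) q`, then `q(Fmat) e₀ ≠ 0` lies in the kernel of `Fmat - μ`. -/
lemma mem_spectrum_Fmat_of_pow_eq (hd : 0 < d) (hdn : d ≤ n) {μ : ℂ} (hμ : μ ^ d = η) :
    μ ∈ spectrum ℂ (Fmat n d η) := by
  set q := (X ^ d - C η) /ₘ (X - C μ)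
  have hq : (X - C μ) * q = X ^ d - C η :=
    mul_divByMonic_eq_iff_isRoot.mpr (by simp [hμ])
  have hdeg := congrArg natDegree hq
  rw [natDegree_X_pow_sub_C] at hdeg
  have hq0 : q ≠ 0 := by
    intro h0
    rw [h0, mul_zero, natDegree_zero] at hdeg
    omega
  rw [natDegree_mul (X_sub_C_ne_zero μ) hq0, natDegree_X_sub_C] at hdeg
  have hker : (Fmat n d η - algebraMap ℂ _ μ) *ᵥ (aeval (Fmat n d η) q *ᵥ natSingle n 0) = 0 := by
    rw [mulVec_mulVec, show Fmat n d η - algebraMap ℂ _ μ = aeval (Fmat n d η) (X - C μ) by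
        rw [map_sub, aeval_X, aeval_C], ← aeval_mul, hq, map_sub, map_pow, aeval_X, aeval_C,
      Algebra.algebraMap_eq_smul_one, sub_mulVec, Fmat_pow_mulVec_natSingle_of_lt η hdn hd,
      smul_mulVec, one_mulVec, sub_self]
  rw [spectrum.mem_iff]
  intro hunit
  have hinj := mulVec_injective_iff_isUnit.mpr
    (neg_sub (algebraMap ℂ _ μ) (Fmat n d η) ▸ hunit.neg)
  exact aeval_Fmat_mulVec_natSingle_zero_ne_zero η hdn hq0 (by omega)
    (hinj (by rw [hker, mulVec_zero]))

lemma differentiable_Fmat_apply (i j : Fin n) : Differentiable ℂ fun η => Fmat n d η i j := by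
  simp only [Fmat, of_apply]
  split_ifs <;> fun_prop

lemma spectrum_Fmat_zero (hd : 0 < d) (hdn : d ≤ n) : spectrum ℂ (Fmat n d 0) = {0} := by
  refine Set.eq_singleton_iff_unique_mem.mpr ⟨mem_spectrum_Fmat_of_pow_eq 0 hd hdn
    (zero_pow hd.ne'), fun μ hμ => ?_⟩
  rcases pow_eq_or_eq_of_mem_spectrum_Fmat 0 hd hdn hμ with h | h
  exacts [pow_eq_zero_iff hd.ne' |>.mp h, h]

lemma norm_pow_le_of_mem_spectrum_Fmat (hd : 0 < d) (hdn : d ≤ n) (hη : ‖η‖ ≤ 1) {μ : ℂ}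
    (hμ : μ ∈ spectrum ℂ (Fmat n d η)) : ‖μ‖ ^ d ≤ ‖η‖ := by
  rcases pow_eq_or_eq_of_mem_spectrum_Fmat η hd hdn hμ with h | rfl
  · rw [← norm_pow, h]
  · exact pow_le_of_le_one (norm_nonneg _) hη hd.ne'

lemma sRad_Fmat_lt_one (hd : 0 < d) (hdn : d ≤ n) (hη : ‖η‖ < 1) : sRad (Fmat n d η) < 1 := by
  obtain ⟨μ₀, hμ₀⟩ := IsAlgClosed.exists_pow_nat_eq η hd
  rw [sRad, ((finite_spectrum _).image _).csSup_lt_iff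
    ⟨_, Set.mem_image_of_mem _ (mem_spectrum_Fmat_of_pow_eq η hd hdn hμ₀)⟩]
  rintro _ ⟨μ, hμ, rfl⟩
  exact (pow_lt_one_iff_of_nonneg (norm_nonneg μ) hd.ne').mp
    ((norm_pow_le_of_mem_spectrum_Fmat η hd hdn hη.le hμ).trans_lt hη)

end Fmat

section mobius

variable {z : ℂ}

lemma one_sub_conj_mul_ne_zero (hz : ‖z‖ < 1) {ζ : ℂ} (hζ : ‖ζ‖ < 1) :
    1 - starRingEnd ℂ z * ζ ≠ 0 := by
  rw [sub_ne_zero]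
  intro h
  have : ‖starRingEnd ℂ z * ζ‖ < 1 := by
    rw [norm_mul, RCLike.norm_conj]
    nlinarith [norm_nonneg z, norm_nonneg ζ]
  simp [← h] at this

lemma norm_mobius_lt_one (hz : ‖z‖ < 1) {ζ : ℂ} (hζ : ‖ζ‖ < 1) :
    ‖(ζ - z) / (1 - starRingEnd ℂ z * ζ)‖ < 1 := by
  rw [norm_div, div_lt_one (norm_pos_iff.mpr (one_sub_conj_mul_ne_zero hz hζ))]
  have hnormSq : Complex.normSq (1 - starRingEnd ℂ z * ζ) - Complex.normSq (ζ - z)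
      = (1 - Complex.normSq z) * (1 - Complex.normSq ζ) := by
    simp only [Complex.normSq_apply, Complex.sub_re, Complex.sub_im, Complex.mul_re,
      Complex.mul_im, Complex.one_re, Complex.one_im, Complex.conj_re, Complex.conj_im]
    ring
  have hz2 : Complex.normSq z < 1 := by
    rw [← Complex.sq_norm]
    nlinarith [norm_nonneg z]
  have hζ2 : Complex.normSq ζ < 1 := by
    rw [← Complex.sq_norm]
    nlinarith [norm_nonneg ζ]
  refine lt_of_pow_lt_pow_left₀ 2 (norm_nonneg _) ?_
  rw [Complex.sq_norm, Complex.sq_norm]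
  nlinarith

lemma differentiableOn_mobius (hz : ‖z‖ < 1) :
    DifferentiableOn ℂ (fun ζ => (ζ - z) / (1 - starRingEnd ℂ z * ζ)) (ball 0 1) :=
  DifferentiableOn.div (by fun_prop) (by fun_prop)
    fun _ hζ => one_sub_conj_mul_ne_zero hz (mem_ball_zero_iff.mp hζ)

end mobius

lemma distM_singleton_zero (μ : ℂ) : distM μ {0} = ‖μ‖ := by
  simp [distM]

lemma distM_zero (K : Set ℂ) : distM 0 K = sInf ((fun ν => ‖ν‖) '' K) := by
  simp [distM]

section sharpness

variable {n d : ℕ} {η : ℂ}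

lemma sSup_norm_pow_spectrum_Fmat (hd : 0 < d) (hdn : d ≤ n) (hη : ‖η‖ ≤ 1) :
    sSup ((fun μ => ‖μ‖ ^ d) '' spectrum ℂ (Fmat n d η)) = ‖η‖ := by
  obtain ⟨μ₀, hμ₀⟩ := IsAlgClosed.exists_pow_nat_eq η hd
  refine IsGreatest.csSup_eq ⟨⟨μ₀, mem_spectrum_Fmat_of_pow_eq η hd hdn hμ₀, ?_⟩, ?_⟩
  · rw [← hμ₀, norm_pow]
  · rintro _ ⟨μ, hμ, rfl⟩
    exact norm_pow_le_of_mem_spectrum_Fmat η hd hdn hη hμ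

lemma distM_zero_spectrum_Fmat_pow_le (hd : 0 < d) (hdn : d ≤ n) (hη : ‖η‖ ≤ 1) {D : ℕ}
    (hD : d ≤ D) : distM 0 (spectrum ℂ (Fmat n d η)) ^ D ≤ ‖η‖ := by
  obtain ⟨μ₀, hμ₀⟩ := IsAlgClosed.exists_pow_nat_eq η hd
  have hnorm : ‖μ₀‖ ^ d = ‖η‖ := by rw [← norm_pow, hμ₀]
  have hμ₀_le : ‖μ₀‖ ≤ 1 :=
    (pow_le_one_iff_of_nonneg (norm_nonneg _) hd.ne').mp (hnorm ▸ hη)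
  have hinf_nonneg : 0 ≤ sInf ((fun ν => ‖ν‖) '' spectrum ℂ (Fmat n d η)) :=
    Real.sInf_nonneg (by rintro _ ⟨ν, -, rfl⟩; exact norm_nonneg ν)
  rw [distM_zero]
  calc sInf ((fun ν => ‖ν‖) '' spectrum ℂ (Fmat n d η)) ^ D ≤ ‖μ₀‖ ^ D :=
        pow_le_pow_left₀ hinf_nonneg (csInf_le ⟨0, by rintro _ ⟨ν, -, rfl⟩; exact norm_nonneg ν⟩
          ⟨μ₀, mem_spectrum_Fmat_of_pow_eq η hd hdn hμ₀, rfl⟩) D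
    _ ≤ ‖μ₀‖ ^ d := pow_le_pow_of_le_one (norm_nonneg _) hμ₀_le hD
    _ = ‖η‖ := hnorm

end sharpness

theorem stmt13_general (n d : ℕ) (hd1 : 1 ≤ d) (hdn : d ≤ n)
    (z w : ℂ) (hz : z ∈ ball (0 : ℂ) 1) (hw : w ∈ ball (0 : ℂ) 1) :
    ∃ F : ℂ → Matrix (Fin n) (Fin n) ℂ,
      F = (fun ζ => Fmat n d ((ζ - z) / (1 - (starRingEnd ℂ z) * ζ))) ∧
      (∀ i j : Fin n, DifferentiableOn ℂ (fun ζ => F ζ i j) (ball (0 : ℂ) 1)) ∧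
      (∀ ζ ∈ ball (0 : ℂ) 1, sRad (F ζ) < 1) ∧
      max
        (sSup ((fun μ =>
          distM μ (spectrum ℂ (F z)) ^ (minpoly ℂ (F z)).natDegree) '' spectrum ℂ (F w)))
        (sSup ((fun lam =>
          distM lam (spectrum ℂ (F w)) ^ (minpoly ℂ (F w)).natDegree) '' spectrum ℂ (F z)))
        = ‖(z - w) / (1 - (starRingEnd ℂ z) * w)‖ := by
  have hz' : ‖z‖ < 1 := mem_ball_zero_iff.mp hz
  have hη : ‖(w - z) / (1 - starRingEnd ℂ z * w)‖ < 1 :=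
    norm_mobius_lt_one hz' (mem_ball_zero_iff.mp hw)
  refine ⟨_, rfl, fun i j => (differentiable_Fmat_apply i j).comp_differentiableOn
    (differentiableOn_mobius hz'), fun ζ hζ => sRad_Fmat_lt_one _ hd1 hdn
    (norm_mobius_lt_one hz' (mem_ball_zero_iff.mp hζ)), ?_⟩
  simp only [sub_self, zero_div]
  rw [spectrum_Fmat_zero hd1 hdn, natDegree_minpoly_Fmat_zero hd1 hdn, Set.image_singleton,
    csSup_singleton]
  simp only [distM_singleton_zero]
  rw [sSup_norm_pow_spectrum_Fmat hd1 hdn hη.le, max_eq_left (distM_zero_spectrum_Fmat_pow_le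
    hd1 hdn hη.le (le_natDegree_minpoly_Fmat _ hdn)), ← neg_sub w z, neg_div, norm_neg]

/-- (Sharpness of Theorem 1) For every `n ≥ 2`, `1 ≤ d ≤ n` and `z, w ∈ 𝔻` there is a
holomorphic `𝔉 : 𝔻 → Ω_n` attaining equality in the two-sided Schwarz inequality;
explicitly `𝔉(ζ) = diag(N_d(M(ζ)), M(ζ)·I_{n-d})` with `M(ζ) = (ζ - z)/(1 - conj(z)ζ)`
works. -/
theorem stmt13 (n d : ℕ) (hn : 2 ≤ n) (hd1 : 1 ≤ d) (hdn : d ≤ n)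
    (z w : ℂ) (hz : z ∈ ball (0 : ℂ) 1) (hw : w ∈ ball (0 : ℂ) 1) :
    ∃ F : ℂ → Matrix (Fin n) (Fin n) ℂ,
      F = (fun ζ => Fmat n d ((ζ - z) / (1 - (starRingEnd ℂ z) * ζ))) ∧
      (∀ i j : Fin n, DifferentiableOn ℂ (fun ζ => F ζ i j) (ball (0 : ℂ) 1)) ∧
      (∀ ζ ∈ ball (0 : ℂ) 1, sRad (F ζ) < 1) ∧
      max
        (sSup ((fun μ =>
          distM μ (spectrum ℂ (F z)) ^ (minpoly ℂ (F z)).natDegree) '' spectrum ℂ (F w)))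
        (sSup ((fun lam =>
          distM lam (spectrum ℂ (F w)) ^ (minpoly ℂ (F w)).natDegree) '' spectrum ℂ (F z)))
        = ‖(z - w) / (1 - (starRingEnd ℂ z) * w)‖ :=
  stmt13_general n d hd1 hdn z w hz hw
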